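/- Let n ≥ 1 and let F : 𝔽₂ⁿ → 𝔽₂ⁿ be any function. Then the ambiguity satisfies 𝒜(F) ≥ (2ⁿ − 1)·2ⁿ⁻¹, with equality if and only if F is APN (i.e., Δ_F ≤ 2). -/

import Mathlib

/-!
For `a ≠ 0` in characteristic two, the solutions of `F (x + a) - F x = b` come in pairs
`{x, x + a}`, so every `δ_F(a,b)` is even, and an even `d` satisfies `d ≤ 2 * d.choose 2`
with equality iff `d ≤ 2`. Summing over `b`, where `∑_b δ_F(a,b) = 2ⁿ`, and then over the
`2ⁿ - 1` nonzero `a` gives the bound together with its equality case.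
-/

open Finset

/-- `δ_F(a,b) = |{x : F(x+a) - F(x) = b}|`. -/
def deltaF {G₁ G₂ : Type*} [AddCommGroup G₁] [Fintype G₁] [DecidableEq G₁]
    [AddCommGroup G₂] [DecidableEq G₂] (F : G₁ → G₂) (a : G₁) (b : G₂) : ℕ :=
  (univ.filter fun x => F (x + a) - F x = b).card

/-- The ambiguity `𝒜(F) = Σ_{a ≠ 0} Σ_b (δ_F(a,b) choose 2)`. -/
def ambiguity {G₁ G₂ : Type*} [AddCommGroup G₁] [Fintype G₁] [DecidableEq G₁]
    [AddCommGroup G₂] [Fintype G₂] [DecidableEq G₂] (F : G₁ → G₂) : ℕ :=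
  ∑ a ∈ univ.filter (fun a : G₁ => a ≠ 0), ∑ b : G₂, (deltaF F a b).choose 2

/-- The differential uniformity `Δ_F = max_{a ≠ 0, b} δ_F(a,b)`. -/
def diffUnif {G₁ G₂ : Type*} [AddCommGroup G₁] [Fintype G₁] [DecidableEq G₁]
    [AddCommGroup G₂] [Fintype G₂] [DecidableEq G₂] (F : G₁ → G₂) : ℕ :=
  (univ.filter (fun a : G₁ => a ≠ 0)).sup fun a => univ.sup fun b : G₂ => deltaF F a b


namespace Nat

lemma two_mul_choose_two (d : ℕ) : 2 * d.choose 2 = d * (d - 1) := by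
  rw [choose_two_right, Nat.mul_div_cancel' d.even_mul_pred_self.two_dvd]

lemma le_two_mul_choose_two_of_even {d : ℕ} (hd : Even d) : d ≤ 2 * d.choose 2 := by
  obtain ⟨m, rfl⟩ := hd
  rw [two_mul_choose_two]
  rcases m with _ | m
  · simp
  · exact Nat.le_mul_of_pos_right _ (by omega)

lemma two_mul_choose_two_eq_self_iff_of_even {d : ℕ} (hd : Even d) :
    2 * d.choose 2 = d ↔ d ≤ 2 := by
  obtain ⟨m, rfl⟩ := hd
  rw [two_mul_choose_two]
  rcases m with _ | m
  · simp
  · rw [mul_eq_left₀ (by omega)]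
    omega

end Nat

namespace Finset

variable {ι : Type*} {s : Finset ι} {f : ι → ℕ}

lemma sum_le_two_mul_sum_choose_two (hf : ∀ i ∈ s, Even (f i)) :
    ∑ i ∈ s, f i ≤ 2 * ∑ i ∈ s, (f i).choose 2 := by
  rw [mul_sum]
  exact sum_le_sum fun i hi => Nat.le_two_mul_choose_two_of_even (hf i hi)

lemma two_mul_sum_choose_two_eq_sum_iff (hf : ∀ i ∈ s, Even (f i)) :
    2 * ∑ i ∈ s, (f i).choose 2 = ∑ i ∈ s, f i ↔ ∀ i ∈ s, f i ≤ 2 := by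
  rw [mul_sum, eq_comm,
    sum_eq_sum_iff_of_le fun i hi => Nat.le_two_mul_choose_two_of_even (hf i hi)]
  exact forall₂_congr fun i hi => by
    rw [eq_comm, Nat.two_mul_choose_two_eq_self_iff_of_even (hf i hi)]

lemma even_card_of_involution {α : Type*} {t : Finset α} (g : α → α)
    (hg_mem : ∀ x ∈ t, g x ∈ t) (hg_inv : ∀ x ∈ t, g (g x) = x) (hg_ne : ∀ x ∈ t, g x ≠ x) :
    Even t.card := by
  rw [← ZMod.natCast_eq_zero_iff_even, card_eq_sum_ones, Nat.cast_sum, Nat.cast_one]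
  exact sum_involution (fun x _ => g x) (fun _ _ => by decide) (fun x hx _ => hg_ne x hx)
    hg_mem hg_inv

end Finset

section Differential

variable {G₁ G₂ : Type*} [AddCommGroup G₁] [Fintype G₁] [DecidableEq G₁]
  [AddCommGroup G₂] [DecidableEq G₂]

lemma even_deltaF (F : G₁ → G₂) {a : G₁} {b : G₂} (ha : a + a = 0) (ha₀ : a ≠ 0)
    (hb : b + b = 0) : Even (deltaF F a b) := by
  refine even_card_of_involution (· + a) (fun x hx => ?_) (fun x _ => by simp [add_assoc, ha])
    (fun x _ => by simpa using ha₀)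
  rw [mem_filter_univ] at hx ⊢
  rw [add_assoc, ha, add_zero, ← neg_sub, hx, neg_eq_of_add_eq_zero_left hb]

variable [Fintype G₂]

lemma sum_deltaF (F : G₁ → G₂) (a : G₁) :
    ∑ b, deltaF F a b = Fintype.card G₁ :=
  (card_eq_sum_card_fiberwise fun x _ => mem_univ (F (x + a) - F x)).symm

lemma sum_sum_deltaF (F : G₁ → G₂) :
    ∑ a ∈ univ.filter (· ≠ 0), ∑ b, deltaF F a b = (Fintype.card G₁ - 1) * Fintype.card G₁ := by
  simp only [sum_deltaF, sum_const, smul_eq_mul, filter_ne', card_erase_of_mem (mem_univ _),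
    card_univ]

lemma diffUnif_le_iff (F : G₁ → G₂) (k : ℕ) :
    diffUnif F ≤ k ↔ ∀ a ≠ 0, ∀ b, deltaF F a b ≤ k := by
  simp [diffUnif, Finset.sup_le_iff]

lemma card_sub_one_mul_card_le_two_mul_ambiguity (h₁ : ∀ x : G₁, x + x = 0)
    (h₂ : ∀ y : G₂, y + y = 0) (F : G₁ → G₂) :
    (Fintype.card G₁ - 1) * Fintype.card G₁ ≤ 2 * ambiguity F := by
  have := sum_le_two_mul_sum_choose_two (s := univ.filter (· ≠ 0) ×ˢ univ)
    (f := fun p => deltaF F p.1 p.2) fun p hp => even_deltaF F (h₁ _) (by simp_all) (h₂ _)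
  rwa [sum_product, sum_product, sum_sum_deltaF] at this

lemma two_mul_ambiguity_eq_iff (h₁ : ∀ x : G₁, x + x = 0) (h₂ : ∀ y : G₂, y + y = 0)
    (F : G₁ → G₂) :
    2 * ambiguity F = (Fintype.card G₁ - 1) * Fintype.card G₁ ↔ diffUnif F ≤ 2 := by
  have := two_mul_sum_choose_two_eq_sum_iff (s := univ.filter (· ≠ 0) ×ˢ univ)
    (f := fun p => deltaF F p.1 p.2) fun p hp => even_deltaF F (h₁ _) (by simp_all) (h₂ _)
  rw [sum_product, sum_product, sum_sum_deltaF] at this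
  rw [ambiguity, this, diffUnif_le_iff]
  simp only [mem_product, mem_filter_univ, mem_univ, and_true, Prod.forall]
  exact forall_congr' fun a => forall_comm

end Differential

lemma two_pow_sub_one_mul_two_pow (n : ℕ) :
    (2 ^ n - 1) * 2 ^ n = 2 * ((2 ^ n - 1) * 2 ^ (n - 1)) := by
  cases n with
  | zero => simp
  | succ n => rw [pow_succ, Nat.add_sub_cancel]; ring

theorem ambiguity_ge_APN_bound_general {n : ℕ}
    (F : (Fin n → ZMod 2) → (Fin n → ZMod 2)) :
    (2 ^ n - 1) * 2 ^ (n - 1) ≤ ambiguity F ∧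
      (ambiguity F = (2 ^ n - 1) * 2 ^ (n - 1) ↔ diffUnif F ≤ 2) := by
  have add_self (v : Fin n → ZMod 2) : v + v = 0 := funext fun i => CharTwo.add_self_eq_zero (v i)
  have hcard : Fintype.card (Fin n → ZMod 2) = 2 ^ n := by simp
  have hle := card_sub_one_mul_card_le_two_mul_ambiguity add_self add_self F
  have heq := two_mul_ambiguity_eq_iff add_self add_self F
  rw [hcard, two_pow_sub_one_mul_two_pow] at hle heq
  exact ⟨by omega, by rw [← heq]; omega⟩

theorem ambiguity_ge_APN_bound {n : ℕ} (hn : 1 ≤ n)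
    (F : (Fin n → ZMod 2) → (Fin n → ZMod 2)) :
    (2 ^ n - 1) * 2 ^ (n - 1) ≤ ambiguity F ∧
      (ambiguity F = (2 ^ n - 1) * 2 ^ (n - 1) ↔ diffUnif F ≤ 2) :=
  ambiguity_ge_APN_bound_general F
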